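/- For every integer k ≥ 7, in every proper k-edge-coloring of the graph G'_k(p,q), the edges pp' and qq' receive the same color. -/

import Mathlib

open SimpleGraph

/-- The vertices of the edge gadget `G'_k(p,q)`: the two parts `P` and `Q` of a complete
bipartite graph `K_{k-1,k-1}`, and the four vertices `p, p', q, q'`. -/
inductive EGVert (k : ℕ) where
  | p : EGVert k
  | p' : EGVert k
  | q : EGVert k
  | q' : EGVert k
  | P : Fin (k - 1) → EGVert k
  | Q : Fin (k - 1) → EGVert k
deriving DecidableEq

/-- The edge gadget `G'_k(p,q)`: a complete bipartite graph with parts `P` and `Q`,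
with `p'` complete to `P`, `q'` complete to `Q`, and the extra edges `pp'` and `qq'`. -/
def EG (k : ℕ) : SimpleGraph (EGVert k) :=
  SimpleGraph.fromRel (fun a b =>
    (∃ i j, a = EGVert.P i ∧ b = EGVert.Q j) ∨
    (∃ i, a = EGVert.p' ∧ b = EGVert.P i) ∨
    (∃ i, a = EGVert.q' ∧ b = EGVert.Q i) ∨
    (a = EGVert.p ∧ b = EGVert.p') ∨
    (a = EGVert.q ∧ b = EGVert.q'))

theorem EG_adj_pp' (k : ℕ) : (EG k).Adj EGVert.p EGVert.p' := by
  rw [EG, SimpleGraph.fromRel_adj]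
  exact ⟨fun h => (by cases h), Or.inl (by tauto)⟩

theorem EG_adj_qq' (k : ℕ) : (EG k).Adj EGVert.q EGVert.q' := by
  rw [EG, SimpleGraph.fromRel_adj]
  exact ⟨fun h => (by cases h), Or.inl (by tauto)⟩

/-- The edge `pp'` of the edge gadget, as a vertex of its line graph. -/
def edgePP (k : ℕ) : (EG k).edgeSet := ⟨s(EGVert.p, EGVert.p'), EG_adj_pp' k⟩

/-- The edge `qq'` of the edge gadget, as a vertex of its line graph. -/
def edgeQQ (k : ℕ) : (EG k).edgeSet := ⟨s(EGVert.q, EGVert.q'), EG_adj_qq' k⟩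

/-!
Suppose `α := c(pp')` differs from `c(qq')`. The `k` edges at `p'` carry distinct colours, so no
edge `p'P_i` has colour `α`; every `P_i` has degree `k`, hence sees all `k` colours, so each `P_i`
is matched to some `Q_{J i}` by an `α`-edge. Properness at `Q` makes `J` injective, hence a
bijection onto `Q`. But `q'` also has degree `k` and `qq'` is not coloured `α`, so some `q'Q_j`
has colour `α`, and `Q_j` would carry two `α`-edges.
-/

open Finset

namespace SimpleGraph

variable {V α : Type*} {G : SimpleGraph V} {c : G.edgeSet → α}

theorem edgeColor_ne_of_mem (hproper : ∀ e f : G.edgeSet, G.lineGraph.Adj e f → c e ≠ c f)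
    {e f : G.edgeSet} {v : V} (he : v ∈ (e : Sym2 V)) (hf : v ∈ (f : Sym2 V))
    (hef : (e : Sym2 V) ≠ f) : c e ≠ c f :=
  hproper e f (lineGraph_adj_iff_exists.2 ⟨fun h => hef (congrArg _ h), v, he, hf⟩)

theorem exists_edgeColor_eq_of_card_le
    (hproper : ∀ e f : G.edgeSet, G.lineGraph.Adj e f → c e ≠ c f) {S : Finset α}
    (hrange : ∀ e, c e ∈ S) {v : V} {t : Finset V} (ht : ∀ w ∈ t, G.Adj v w)
    (hcard : #S ≤ #t) {a : α} (ha : a ∈ S) :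
    ∃ w, ∃ hw : w ∈ t, c ⟨s(v, w), ht w hw⟩ = a := by
  have hinj : ∀ w₁ w₂ hw₁ hw₂,
      c ⟨s(v, w₁), ht w₁ hw₁⟩ = c ⟨s(v, w₂), ht w₂ hw₂⟩ → w₁ = w₂ := by
    intro w₁ w₂ hw₁ hw₂ hc
    by_contra hne
    exact edgeColor_ne_of_mem hproper (Sym2.mem_mk_left v w₁) (Sym2.mem_mk_left v w₂)
      (fun h => hne (Sym2.congr_right.1 h)) hc
  obtain ⟨w, hw, hc⟩ :=
    surj_on_of_inj_on_of_card_le (fun w hw => c ⟨s(v, w), ht w hw⟩) (fun _ _ => hrange _)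
      hinj hcard a ha
  exact ⟨w, hw, hc.symm⟩

end SimpleGraph

namespace EG

variable {k : ℕ}

theorem adj_P_Q (i j : Fin (k - 1)) : (EG k).Adj (EGVert.P i) (EGVert.Q j) := by
  rw [EG, fromRel_adj]
  exact ⟨nofun, Or.inl (Or.inl ⟨i, j, rfl, rfl⟩)⟩

theorem adj_p'_P (i : Fin (k - 1)) : (EG k).Adj EGVert.p' (EGVert.P i) := by
  rw [EG, fromRel_adj]
  exact ⟨nofun, Or.inl (Or.inr (Or.inl ⟨i, rfl, rfl⟩))⟩

theorem adj_q'_Q (j : Fin (k - 1)) : (EG k).Adj EGVert.q' (EGVert.Q j) := by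
  rw [EG, fromRel_adj]
  exact ⟨nofun, Or.inl (Or.inr (Or.inr (Or.inl ⟨j, rfl, rfl⟩)))⟩

theorem card_insert_image_Q {x : EGVert k} (hx : ∀ j, EGVert.Q j ≠ x) :
    #(insert x (univ.image EGVert.Q)) = k - 1 + 1 := by
  rw [card_insert_of_notMem (by simpa using hx),
    card_image_of_injective _ fun _ _ => EGVert.Q.inj, card_univ, Fintype.card_fin]

theorem exists_color_eq_of_adj_Q {c : (EG k).edgeSet → ℕ} (hrange : ∀ e, c e ∈ Icc 1 k)
    (hproper : ∀ e f : (EG k).edgeSet, (EG k).lineGraph.Adj e f → c e ≠ c f)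
    {x v : EGVert k} (hx : (EG k).Adj x v) (hQ : ∀ j, (EG k).Adj v (EGVert.Q j))
    (hxQ : ∀ j, EGVert.Q j ≠ x) {a : ℕ} (ha : a ∈ Icc 1 k)
    (hxa : c ⟨s(x, v), hx⟩ ≠ a) :
    ∃ j, c ⟨s(v, EGVert.Q j), hQ j⟩ = a := by
  have hcard : #(Icc 1 k) ≤ #(insert x (univ.image EGVert.Q)) := by
    rw [card_insert_image_Q hxQ, Nat.card_Icc]
    omega
  obtain ⟨w, hw, hc⟩ := exists_edgeColor_eq_of_card_le hproper hrange
    (by simp only [mem_insert, mem_image]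
        rintro _ (rfl | ⟨j, -, rfl⟩)
        exacts [hx.symm, hQ j])
    hcard ha
  simp only [mem_insert, mem_image, mem_univ, true_and] at hw
  obtain rfl | ⟨j, rfl⟩ := hw
  · exact absurd ((congrArg c (Subtype.ext Sym2.eq_swap)).trans hc) hxa
  · exact ⟨j, hc⟩

end EG

open EG

theorem statement11_general (k : ℕ) (c : (EG k).edgeSet → ℕ)
    (hrange : ∀ e, c e ∈ Finset.Icc 1 k)
    (hproper : ∀ e f : (EG k).edgeSet, ((EG k).lineGraph).Adj e f → c e ≠ c f) :
    c (edgePP k) = c (edgeQQ k) := by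
  by_contra hne
  have hp'P : ∀ i, c ⟨s(EGVert.p', EGVert.P i), adj_p'_P i⟩ ≠ c (edgePP k) := fun i =>
    edgeColor_ne_of_mem hproper (v := EGVert.p') (by simp) (by simp [edgePP]) (by simp [edgePP])
  choose J hJ using fun i =>
    exists_color_eq_of_adj_Q hrange hproper (adj_p'_P i) (adj_P_Q i) (by simp) (hrange _)
      (hp'P i)
  have hJ_inj : Function.Injective J := fun i₁ i₂ h => by
    by_contra hi
    exact edgeColor_ne_of_mem hproper (v := EGVert.Q (J i₁)) (by simp) (by simp [h])
      (by simp [hi]) ((hJ i₁).trans (hJ i₂).symm)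
  obtain ⟨j₀, hj₀⟩ :=
    exists_color_eq_of_adj_Q hrange hproper (EG_adj_qq' k) adj_q'_Q (by simp) (hrange _)
      (Ne.symm hne)
  obtain ⟨i, hi⟩ := Finite.surjective_of_injective hJ_inj j₀
  exact edgeColor_ne_of_mem hproper (v := EGVert.Q j₀) (by simp [hi]) (by simp) (by simp)
    ((hJ i).trans hj₀.symm)

theorem statement11 (k : ℕ) (hk : 7 ≤ k) (c : (EG k).edgeSet → ℕ)
    (hrange : ∀ e, c e ∈ Finset.Icc 1 k)
    (hproper : ∀ e f : (EG k).edgeSet, ((EG k).lineGraph).Adj e f → c e ≠ c f) :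
    c (edgePP k) = c (edgeQQ k) :=
  statement11_general k c hrange hproper
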